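/- arXiv:1906.03797 — 4 statements merged into one kernel-verified Lean document; each statement's English description precedes it below -/
import Mathlib

section
/- For any 2×2 real matrix A and any 2×2 orthogonal matrix Q, rank(E(QᵀAQ) + (E(QᵀAQ))ᵀ) = rank(EA + (EA)ᵀ), where E = [[0,-1],[1,0]]. -/
/-!
For `E = !![0, -1; 1, 0]` and any 2×2 matrix `B` one has `Bᵀ E B = det B • E`, so an orthogonal
`Q` satisfies `E Qᵀ = det Q • Qᵀ E` with `det Q = ±1`. Hence the symmetric part `E A + (E A)ᵀ`
transforms under `A ↦ Qᵀ A Q` by orthogonal conjugation followed by the sign `det Q`, neither of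
which changes the rank.
-/

open Matrix

namespace Matrix

variable {R : Type*} [CommRing R]

theorem transpose_mul_rotation_mul_eq_det_smul (B : Matrix (Fin 2) (Fin 2) R) :
    Bᵀ * !![0, -1; 1, 0] * B = B.det • !![0, -1; 1, 0] := by
  ext i j
  fin_cases i <;> fin_cases j <;> simp [mul_apply, Fin.sum_univ_two, det_fin_two] <;> ring

theorem rotation_mul_transpose_of_mul_transpose_eq_one {Q : Matrix (Fin 2) (Fin 2) R}
    (hQ : Q * Qᵀ = 1) :
    !![0, -1; 1, 0] * Qᵀ = Q.det • (Qᵀ * !![0, -1; 1, 0]) := by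
  have hQ' : Qᵀ * Q = 1 := mul_eq_one_comm.mp hQ
  calc !![0, -1; 1, 0] * Qᵀ = Qᵀ * (Q * !![0, -1; 1, 0] * Qᵀ) := by
        rw [← Matrix.mul_assoc, ← Matrix.mul_assoc, hQ', Matrix.one_mul]
    _ = Q.det • (Qᵀ * !![0, -1; 1, 0]) := by
        have h := transpose_mul_rotation_mul_eq_det_smul Qᵀ
        rw [transpose_transpose, det_transpose] at h
        rw [h, Matrix.mul_smul]

theorem rotation_mul_add_transpose_conj {Q : Matrix (Fin 2) (Fin 2) R} (hQ : Q * Qᵀ = 1)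
    (A : Matrix (Fin 2) (Fin 2) R) :
    !![0, -1; 1, 0] * (Qᵀ * A * Q) + (!![0, -1; 1, 0] * (Qᵀ * A * Q))ᵀ =
      Q.det • (Qᵀ * (!![0, -1; 1, 0] * A + (!![0, -1; 1, 0] * A)ᵀ) * Q) := by
  have hEQ := rotation_mul_transpose_of_mul_transpose_eq_one hQ
  have hQE : Q * (!![0, -1; 1, 0])ᵀ = Q.det • ((!![0, -1; 1, 0])ᵀ * Q) := by
    have h := congrArg transpose hEQ
    rwa [transpose_mul, transpose_transpose, transpose_smul, transpose_mul,
      transpose_transpose] at h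
  calc !![0, -1; 1, 0] * (Qᵀ * A * Q) + (!![0, -1; 1, 0] * (Qᵀ * A * Q))ᵀ
      = (!![0, -1; 1, 0] * Qᵀ) * A * Q + Qᵀ * Aᵀ * (Q * (!![0, -1; 1, 0])ᵀ) := by
        simp only [transpose_mul, transpose_transpose, Matrix.mul_assoc]
    _ = Q.det • (Qᵀ * (!![0, -1; 1, 0] * A + (!![0, -1; 1, 0] * A)ᵀ) * Q) := by
        rw [hEQ, hQE]
        simp only [smul_mul, Matrix.mul_smul, Matrix.add_mul, Matrix.mul_add, transpose_mul,
          Matrix.mul_assoc, smul_add]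

theorem rank_smul_transpose_mul_mul {n : Type*} [Fintype n] [DecidableEq n] {c : R}
    (hc : IsUnit c) {Q : Matrix n n R} (hQ : IsUnit Q.det) (M : Matrix n n R) :
    (c • (Qᵀ * M * Q)).rank = M.rank := by
  rw [rank_smul_of_mem_nonZeroDivisors _ hc.mem_nonZeroDivisors,
    rank_mul_eq_left_of_isUnit_det _ _ hQ,
    rank_mul_eq_right_of_isUnit_det _ _ (by rwa [det_transpose])]

theorem isUnit_det_of_mul_transpose_eq_one {n : Type*} [Fintype n] [DecidableEq n]
    {Q : Matrix n n R} (hQ : Q * Qᵀ = 1) : IsUnit Q.det :=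
  IsUnit.of_mul_eq_one _ (by simpa [det_mul, det_transpose] using congrArg det hQ)

end Matrix

/-- The skew-symmetric rank is invariant under orthogonal conjugation. -/
theorem rank_skw_orthogonal_conj (A Q : Matrix (Fin 2) (Fin 2) ℝ)
    (hQ : Q * Qᵀ = 1) :
    ((!![0, -1; 1, 0] : Matrix (Fin 2) (Fin 2) ℝ) * (Qᵀ * A * Q) +
      ((!![0, -1; 1, 0] : Matrix (Fin 2) (Fin 2) ℝ) * (Qᵀ * A * Q))ᵀ).rank =
    ((!![0, -1; 1, 0] : Matrix (Fin 2) (Fin 2) ℝ) * A +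
      ((!![0, -1; 1, 0] : Matrix (Fin 2) (Fin 2) ℝ) * A)ᵀ).rank := by
  have hdet := isUnit_det_of_mul_transpose_eq_one hQ
  rw [rotation_mul_add_transpose_conj hQ, rank_smul_transpose_mul_mul hdet hdet]
end

section
/- If A is an invertible 2×2 real matrix, then rank(EA⁻¹ + (EA⁻¹)ᵀ) = rank(EA + (EA)ᵀ), where E = [[0,-1],[1,0]]. -/
open Matrix

/-- The skew-symmetric rank is invariant under matrix inversion. -/
theorem rank_skw_inv (A : Matrix (Fin 2) (Fin 2) ℝ) (hA : IsUnit A.det) :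
    ((!![0, -1; 1, 0] : Matrix (Fin 2) (Fin 2) ℝ) * A⁻¹ +
      ((!![0, -1; 1, 0] : Matrix (Fin 2) (Fin 2) ℝ) * A⁻¹)ᵀ).rank =
    ((!![0, -1; 1, 0] : Matrix (Fin 2) (Fin 2) ℝ) * A +
      ((!![0, -1; 1, 0] : Matrix (Fin 2) (Fin 2) ℝ) * A)ᵀ).rank := by
  set E : Matrix (Fin 2) (Fin 2) ℝ := !![0, -1; 1, 0] with hEdef
  have hE : Eᵀ = -E := by
    ext i j; fin_cases i <;> fin_cases j <;> simp [hEdef]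
  have hinv : IsUnit (A⁻¹).det := by
    simpa [Matrix.det_nonsing_inv] using hA.inv
  have hid : E * A⁻¹ + (E * A⁻¹)ᵀ = (A⁻¹)ᵀ * (E * A + (E * A)ᵀ) * (-(A⁻¹)) := by
    have h1 : A * A⁻¹ = 1 := Matrix.mul_nonsing_inv A hA
    have h2 : (A⁻¹)ᵀ * Aᵀ = 1 := by
      rw [← Matrix.transpose_mul, h1, Matrix.transpose_one]
    rw [Matrix.transpose_mul, hE]
    rw [Matrix.transpose_mul, hE]
    have : (A⁻¹)ᵀ * (E * A + Aᵀ * -E) * -A⁻¹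
        = -((A⁻¹)ᵀ * E * (A * A⁻¹)) + ((A⁻¹)ᵀ * Aᵀ) * (E * A⁻¹) := by
      noncomm_ring
    rw [this, h1, h2]
    noncomm_ring
  rw [hid]
  have hnegdet : IsUnit (-(A⁻¹)).det := by
    simpa [Matrix.det_neg] using hinv
  rw [Matrix.rank_mul_eq_left_of_isUnit_det _ _ hnegdet,
    Matrix.rank_mul_eq_right_of_isUnit_det _ _ (by simpa using hinv)]
end

section
/- Let A = [[0,c],[c,0]] with c ≠ 0, so that rank(A) = 2 and rank(EA + (EA)ᵀ) = 2 where E = [[0,-1],[1,0]]. Define b = x + ξ ∈ ℝ² and Φ(x, t, ξ) = ⟨Ax, ξ⟩ + t|x + ξ|. At any point where |b₁| = |b₂| = 1 and t = ε√2·c with ε the sign of b₂/b₁, the 3×2 mixed Hessian matrix (∂²Φ/∂(x₁,x₂,t)∂(ξ₁,ξ₂)) has rank 1. -/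
open Matrix

/-! With `|b₁| = |b₂| = 1` we have `|b| = √2`, and the choice of `t` makes `t / |b|³ = b₁b₂c/2`.
Then every row of the mixed Hessian is a multiple of `b = (b₁, b₂)`: the rows are `(b₂c/2) b`,
`(b₁c/2) b` and `b / √2`, so the Hessian is the outer product of two nonzero vectors and has
rank exactly one. The two rank-two claims are `det A = -c²` and `det (EA + (EA)ᵀ) = -4c²`. -/

theorem Matrix.rank_eq_zero_iff {m n K : Type*} [Fintype n] [Field K] {A : Matrix m n K} :
    A.rank = 0 ↔ A = 0 := by
  classical
  rw [rank, Submodule.finrank_eq_zero, LinearMap.range_eq_bot, ← toLin'_apply',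
    LinearEquiv.map_eq_zero_iff]

theorem Matrix.rank_vecMulVec_eq_one {m n K : Type*} [Fintype n] [Field K] {w : m → K}
    {v : n → K} (hw : w ≠ 0) (hv : v ≠ 0) : (vecMulVec w v).rank = 1 := by
  refine (rank_vecMulVec_le w v).antisymm (Nat.one_le_iff_ne_zero.mpr fun h => ?_)
  obtain ⟨i, hi⟩ := Function.ne_iff.mp hw
  obtain ⟨j, hj⟩ := Function.ne_iff.mp hv
  exact mul_ne_zero hi hj congr($(rank_eq_zero_iff.mp h) i j)

theorem mixedHessian_eq_vecMulVec {c b₁ b₂ t : ℝ} (hb₁ : b₁ ^ 2 = 1) (hb₂ : b₂ ^ 2 = 1)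
    (ht : t = b₁ * b₂ * √2 * c) :
    (!![t * b₂ ^ 2 / √(b₁ ^ 2 + b₂ ^ 2) ^ 3, c - t * b₁ * b₂ / √(b₁ ^ 2 + b₂ ^ 2) ^ 3;
        c - t * b₁ * b₂ / √(b₁ ^ 2 + b₂ ^ 2) ^ 3, t * b₁ ^ 2 / √(b₁ ^ 2 + b₂ ^ 2) ^ 3;
        b₁ / √(b₁ ^ 2 + b₂ ^ 2), b₂ / √(b₁ ^ 2 + b₂ ^ 2)] : Matrix (Fin 3) (Fin 2) ℝ) =
      vecMulVec ![b₂ * c / 2, b₁ * c / 2, 1 / √2] ![b₁, b₂] := by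
  have hnorm_sq : b₁ ^ 2 + b₂ ^ 2 = 2 := by rw [hb₁, hb₂]; norm_num
  have hsqrt_cube : √2 ^ 3 = 2 * √2 := by rw [pow_succ, Real.sq_sqrt zero_le_two]
  subst ht
  rw [hnorm_sq, hsqrt_cube]
  ext i j
  fin_cases i <;> fin_cases j <;> simp [vecMulVec_apply] <;> field_simp <;> grind

/-- For `A = !![0,c;c,0]` with `c ≠ 0` (so `rank A = 2` and
`rank (E*A + (E*A)ᵀ) = 2`), at any point with `|b₁| = |b₂| = 1` and
`t = ε√2·c`, `ε` the sign of `b₂/b₁`, the 3×2 mixed Hessian of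
`Φ(x,t,ξ) = ⟨Ax,ξ⟩ + t|x+ξ|` has rank 1. -/
theorem mixed_hessian_rank_one (c b₁ b₂ t : ℝ) (hc : c ≠ 0)
    (hb₁ : |b₁| = 1) (hb₂ : |b₂| = 1)
    (ht : t = (b₁ * b₂) * Real.sqrt 2 * c) :
    (!![0, c; c, 0] : Matrix (Fin 2) (Fin 2) ℝ).rank = 2 ∧
    ((!![0, -1; 1, 0] : Matrix (Fin 2) (Fin 2) ℝ) * !![0, c; c, 0] +
      ((!![0, -1; 1, 0] : Matrix (Fin 2) (Fin 2) ℝ) * !![0, c; c, 0])ᵀ).rank = 2 ∧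
    (!![t * b₂ ^ 2 / Real.sqrt (b₁ ^ 2 + b₂ ^ 2) ^ 3,
        c - t * b₁ * b₂ / Real.sqrt (b₁ ^ 2 + b₂ ^ 2) ^ 3;
        c - t * b₁ * b₂ / Real.sqrt (b₁ ^ 2 + b₂ ^ 2) ^ 3,
        t * b₁ ^ 2 / Real.sqrt (b₁ ^ 2 + b₂ ^ 2) ^ 3;
        b₁ / Real.sqrt (b₁ ^ 2 + b₂ ^ 2),
        b₂ / Real.sqrt (b₁ ^ 2 + b₂ ^ 2)] : Matrix (Fin 3) (Fin 2) ℝ).rank = 1 := by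
  have hb₁_sq : b₁ ^ 2 = 1 := by rw [← sq_abs, hb₁, one_pow]
  have hb₂_sq : b₂ ^ 2 = 1 := by rw [← sq_abs, hb₂, one_pow]
  refine ⟨rank_of_det_ne_zero ?_, rank_of_det_ne_zero ?_, ?_⟩
  · simpa [det_fin_two] using hc
  · simpa [det_fin_two] using hc
  · rw [mixedHessian_eq_vecMulVec hb₁_sq hb₂_sq ht]
    refine rank_vecMulVec_eq_one (fun h => ?_) (fun h => ?_)
    · simpa using congr_fun h 2
    · simpa [hb₁] using congrArg abs (congr_fun h 0)
end

section
/- For b = (b₁, b₂) ∈ ℝ² with b ≠ 0, A = [[1,c],[0,1]], and t = -|b|, if b₁ = 0 then det(A) + (t/|b|³)⟨((A+Aᵀ)/2) b, b⟩ = 0; moreover the gradient in b of the function b ↦ det(A) + (t/|b|³)(b₁² + c b₁b₂ + b₂²) at such a point equals (t b₂³ c/|b|⁵, -t b₂³/|b|⁵), which is nonzero when c ≠ 0 and b₂ ≠ 0. -/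
/-!
On the line `b₁ = 0` the quadratic form equals `|b|²`, so `t = -|b|` makes the determinant vanish.
The partial derivatives follow from the quotient rule at any `b ≠ 0`, and the `b₂`-partial is the
`b₁`-partial with the roles of `b₁, b₂` exchanged, since the function is symmetric in them. At
`b₁ = 0` the `b₂`-partial is `-t b₂³/|b|⁵ = b₂³/|b|⁴ ≠ 0`, so the gradient does not vanish.
-/

lemma HasDerivAt.sqrt_pow_three {f : ℝ → ℝ} {f' x : ℝ} (hf : HasDerivAt f f' x) (hx : 0 < f x) :
    HasDerivAt (fun y => √(f y) ^ 3) (3 / 2 * f' * √(f x)) x := by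
  refine ((hf.sqrt hx.ne').pow 3).congr_deriv ?_
  have hsq : √(f x) ^ 2 = f x := Real.sq_sqrt hx.le
  have hpos : 0 < √(f x) := Real.sqrt_pos.mpr hx
  field_simp
  rw [hsq]
  push_cast
  ring

/-- `det A + (t/|b|³) ⟨((A + Aᵀ)/2) b, b⟩` for `A = !![1, c; 0, 1]`. -/
noncomputable def mixedHessianDet (c t b₁ b₂ : ℝ) : ℝ :=
  1 + t / √(b₁ ^ 2 + b₂ ^ 2) ^ 3 * (b₁ ^ 2 + c * b₁ * b₂ + b₂ ^ 2)

lemma mixedHessianDet_comm (c t b₁ b₂ : ℝ) :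
    mixedHessianDet c t b₁ b₂ = mixedHessianDet c t b₂ b₁ := by
  unfold mixedHessianDet
  rw [add_comm (b₁ ^ 2) (b₂ ^ 2)]
  ring

lemma mixedHessianDet_eq_zero_of_fst_eq_zero (c b₂ : ℝ) (hb₂ : b₂ ≠ 0) :
    mixedHessianDet c (-√(0 ^ 2 + b₂ ^ 2)) 0 b₂ = 0 := by
  have hr : 0 < √(0 ^ 2 + b₂ ^ 2) := Real.sqrt_pos.mpr (by positivity)
  have hsq : √(0 ^ 2 + b₂ ^ 2) ^ 2 = 0 ^ 2 + b₂ ^ 2 := Real.sq_sqrt (by positivity)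
  unfold mixedHessianDet
  field_simp
  linear_combination hsq

lemma hasDerivAt_mixedHessianDet_fst (c t b₂ x : ℝ) (hx : x ^ 2 + b₂ ^ 2 ≠ 0) :
    HasDerivAt (fun s => mixedHessianDet c t s b₂)
      (t * ((2 * x + c * b₂) * (x ^ 2 + b₂ ^ 2) - 3 * x * (x ^ 2 + c * x * b₂ + b₂ ^ 2)) /
        √(x ^ 2 + b₂ ^ 2) ^ 5) x := by
  have hpos : 0 < x ^ 2 + b₂ ^ 2 := lt_of_le_of_ne (by positivity) hx.symm
  have hr : 0 < √(x ^ 2 + b₂ ^ 2) := Real.sqrt_pos.mpr hpos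
  have hsq : √(x ^ 2 + b₂ ^ 2) ^ 2 = x ^ 2 + b₂ ^ 2 := Real.sq_sqrt hpos.le
  have hq : HasDerivAt (fun s => s ^ 2 + b₂ ^ 2) (2 * x) x := by
    simpa using (hasDerivAt_pow 2 x).add_const (b₂ ^ 2)
  have hQ : HasDerivAt (fun s => s ^ 2 + c * s * b₂ + b₂ ^ 2) (2 * x + c * b₂) x := by
    simpa using
      (((hasDerivAt_pow 2 x).add ((hasDerivAt_id x).const_mul c |>.mul_const b₂)).add_const
        (b₂ ^ 2))
  have hcoef : HasDerivAt (fun s => t / √(s ^ 2 + b₂ ^ 2) ^ 3)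
      ((0 * √(x ^ 2 + b₂ ^ 2) ^ 3 - t * (3 / 2 * (2 * x) * √(x ^ 2 + b₂ ^ 2))) /
        (√(x ^ 2 + b₂ ^ 2) ^ 3) ^ 2) x :=
    (hasDerivAt_const x t).div (hq.sqrt_pow_three hpos) (by positivity)
  refine ((hcoef.mul hQ).const_add 1).congr_deriv ?_
  field_simp
  linear_combination (2 * x * t + t * b₂ * c) * hsq

lemma hasDerivAt_mixedHessianDet_snd (c t b₁ x : ℝ) (hx : b₁ ^ 2 + x ^ 2 ≠ 0) :
    HasDerivAt (fun s => mixedHessianDet c t b₁ s)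
      (t * ((2 * x + c * b₁) * (x ^ 2 + b₁ ^ 2) - 3 * x * (x ^ 2 + c * x * b₁ + b₁ ^ 2)) /
        √(x ^ 2 + b₁ ^ 2) ^ 5) x := by
  simp_rw [mixedHessianDet_comm c t b₁]
  exact hasDerivAt_mixedHessianDet_fst c t b₁ x (by rwa [add_comm])

theorem fold_nondegenerate_general (c b₁ b₂ t : ℝ) (hb₂ : b₂ ≠ 0)
    (hb₁ : b₁ = 0) (ht : t = -Real.sqrt (b₁ ^ 2 + b₂ ^ 2)) :
    (1 + t / Real.sqrt (b₁ ^ 2 + b₂ ^ 2) ^ 3 *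
        (b₁ ^ 2 + c * b₁ * b₂ + b₂ ^ 2) = 0) ∧
    HasDerivAt (fun s : ℝ => (1 : ℝ) + t / Real.sqrt (s ^ 2 + b₂ ^ 2) ^ 3 *
        (s ^ 2 + c * s * b₂ + b₂ ^ 2))
      (t * b₂ ^ 3 * c / Real.sqrt (b₁ ^ 2 + b₂ ^ 2) ^ 5) b₁ ∧
    HasDerivAt (fun s : ℝ => (1 : ℝ) + t / Real.sqrt (b₁ ^ 2 + s ^ 2) ^ 3 *
        (b₁ ^ 2 + c * b₁ * s + s ^ 2))
      (-(t * b₂ ^ 3) / Real.sqrt (b₁ ^ 2 + b₂ ^ 2) ^ 5) b₂ ∧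
    (t * b₂ ^ 3 * c / Real.sqrt (b₁ ^ 2 + b₂ ^ 2) ^ 5,
      -(t * b₂ ^ 3) / Real.sqrt (b₁ ^ 2 + b₂ ^ 2) ^ 5) ≠ ((0 : ℝ), (0 : ℝ)) := by
  subst hb₁ ht
  have hb : (0 : ℝ) ^ 2 + b₂ ^ 2 ≠ 0 := by positivity
  refine ⟨mixedHessianDet_eq_zero_of_fst_eq_zero c b₂ hb₂,
    (hasDerivAt_mixedHessianDet_fst c _ b₂ 0 hb).congr_deriv (by ring),
    (hasDerivAt_mixedHessianDet_snd c _ 0 b₂ hb).congr_deriv (by rw [add_comm]; ring),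
    fun h => ?_⟩
  have hr : 0 < √(0 ^ 2 + b₂ ^ 2) := Real.sqrt_pos.mpr (by positivity)
  have h₂ : -(-√(0 ^ 2 + b₂ ^ 2) * b₂ ^ 3) / √(0 ^ 2 + b₂ ^ 2) ^ 5 = 0 := congrArg Prod.snd h
  rw [neg_mul, neg_neg, div_eq_zero_iff] at h₂
  exact h₂.elim (mul_ne_zero hr.ne' (pow_ne_zero 3 hb₂)) (pow_pos hr 5).ne'

/-- For `A = !![1,c;0,1]`, `b ≠ 0` with `b₁ = 0` and `t = -|b|`, the mixed
Hessian determinant `det A + (t/|b|³)(b₁² + c b₁ b₂ + b₂²)` vanishes, and its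
gradient in `b` equals `(t b₂³ c/|b|⁵, -t b₂³/|b|⁵) ≠ 0` (for `c ≠ 0`, `b₂ ≠ 0`). -/
theorem fold_nondegenerate (c b₁ b₂ t : ℝ) (hc : c ≠ 0) (hb₂ : b₂ ≠ 0)
    (hb₁ : b₁ = 0) (ht : t = -Real.sqrt (b₁ ^ 2 + b₂ ^ 2)) :
    (1 + t / Real.sqrt (b₁ ^ 2 + b₂ ^ 2) ^ 3 *
        (b₁ ^ 2 + c * b₁ * b₂ + b₂ ^ 2) = 0) ∧
    HasDerivAt (fun s : ℝ => (1 : ℝ) + t / Real.sqrt (s ^ 2 + b₂ ^ 2) ^ 3 *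
        (s ^ 2 + c * s * b₂ + b₂ ^ 2))
      (t * b₂ ^ 3 * c / Real.sqrt (b₁ ^ 2 + b₂ ^ 2) ^ 5) b₁ ∧
    HasDerivAt (fun s : ℝ => (1 : ℝ) + t / Real.sqrt (b₁ ^ 2 + s ^ 2) ^ 3 *
        (b₁ ^ 2 + c * b₁ * s + s ^ 2))
      (-(t * b₂ ^ 3) / Real.sqrt (b₁ ^ 2 + b₂ ^ 2) ^ 5) b₂ ∧
    (t * b₂ ^ 3 * c / Real.sqrt (b₁ ^ 2 + b₂ ^ 2) ^ 5,
      -(t * b₂ ^ 3) / Real.sqrt (b₁ ^ 2 + b₂ ^ 2) ^ 5) ≠ ((0 : ℝ), (0 : ℝ)) :=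
  fold_nondegenerate_general c b₁ b₂ t hb₂ hb₁ ht
end
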